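/- arXiv:1809.05738 — 5 statements merged into one kernel-verified Lean document; each statement's English description precedes it below -/
import Mathlib

section
/- Let Q = (V, A, h, t) be a quiver, k a field, η = (η_v)_{v∈V} ∈ k^V, and d ∈ ℕ^V. If there exists a d-dimensional k-representation of the doubled quiver Q̄ satisfying the relations R_η, then Σ_{v∈V} η_v · d_v = 0 in k (where each d_v is interpreted via the natural map ℕ → k). -/
/-! Take the trace of the relation at each vertex and sum over all vertices: the left side becomes
`Σ_a tr (φ_a ψ_a) - Σ_a tr (ψ_a φ_a)`, which vanishes since `tr (φ ψ) = tr (ψ φ)`, while the right side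
is `Σ_v η_v d_v`. -/

theorem LinearMap.sum_trace_sum_pi_single_apply {k V ι : Type*} [CommRing k] [Fintype V] [DecidableEq V]
    [Fintype ι] (W : V → Type*) [∀ v, AddCommGroup (W v)] [∀ v, Module k (W v)]
    (i : ι → V) (g : ∀ a, Module.End k (W (i a))) :
    ∑ v, LinearMap.trace k (W v) ((∑ a, Pi.single (M := fun v => Module.End k (W v)) (i a) (g a)) v)
      = ∑ a, LinearMap.trace k (W (i a)) (g a) := by
  simp only [Finset.sum_apply, map_sum]
  rw [Finset.sum_comm]
  refine Finset.sum_congr rfl fun a _ => ?_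
  simp only [Pi.apply_single (fun v => LinearMap.trace k (W v)) (fun v => map_zero _),
    Finset.sum_pi_single', Finset.mem_univ, if_true]

/-- If there exists a `d`-dimensional `k`-representation
`((W v), (φ a), (ψ a))` of the doubled quiver `Q̄` satisfying the moment map relations
`R_η` (i.e. for every vertex `v`,
`Σ_{a : hd a = v} φ a ∘ ψ a − Σ_{a : tl a = v} ψ a ∘ φ a = η v • id`), then
`Σ_v η v · d v = 0` in `k`. -/
theorem stmt_5 (k : Type) [Field k] (V A : Type) [Fintype V] [Fintype A] [DecidableEq V]
    (hd tl : A → V) (η : V → k) (d : V → ℕ)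
    (W : V → Type)
    [∀ v, AddCommGroup (W v)] [∀ v, Module k (W v)] [∀ v, FiniteDimensional k (W v)]
    (hdim : ∀ v, Module.finrank k (W v) = d v)
    (φ : ∀ a, W (tl a) →ₗ[k] W (hd a)) (ψ : ∀ a, W (hd a) →ₗ[k] W (tl a))
    -- the relations R_η : Σ_{a : hd a = v} φ a ∘ ψ a − Σ_{a : tl a = v} ψ a ∘ φ a = η v • id
    (hrel : ∀ v,
      (∑ a, Pi.single (M := fun v => W v →ₗ[k] W v) (hd a) ((φ a).comp (ψ a))) v
        - (∑ a, Pi.single (M := fun v => W v →ₗ[k] W v) (tl a) ((ψ a).comp (φ a))) v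
      = η v • (LinearMap.id : W v →ₗ[k] W v)) :
    ∑ v, η v * (d v : k) = 0 := by
  have trace_rel : ∀ v, η v * (d v : k) = LinearMap.trace k (W v)
      ((∑ a, Pi.single (M := fun v => W v →ₗ[k] W v) (hd a) ((φ a).comp (ψ a))) v
        - (∑ a, Pi.single (M := fun v => W v →ₗ[k] W v) (tl a) ((ψ a).comp (φ a))) v) := by
    intro v
    rw [hrel v, map_smul, LinearMap.trace_id, hdim, smul_eq_mul]
  simp only [trace_rel, map_sub, Finset.sum_sub_distrib, LinearMap.sum_trace_sum_pi_single_apply]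
  exact sub_eq_zero.2 (Finset.sum_congr rfl fun a _ => (LinearMap.trace_comp_comm' (φ a) (ψ a)).symm)
end

section
/- Let Q = (V, A, h, t) be a quiver, d ∈ ℕ^V, and θ ∈ ℤ^V generic with respect to d. Let k be a field of characteristic zero, and regard θ as an element of k^V via ℤ → k. Then every d-dimensional k-representation of the doubled quiver Q̄ satisfying the relations R_θ has no subrepresentations other than 0 and itself; in particular, every such representation is θ-stable. -/
/-!
Taking traces in the relations `R_η` and summing over all vertices, the commutator terms
`φ_a ψ_a` and `ψ_a φ_a` cancel, so `∑ η_v dim W_v = 0` for every representation satisfying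
`R_η`. A subrepresentation `U` satisfies the same relations (with the restricted maps), so
`θ · dim U = 0` in `k`, hence in `ℤ` since `k` has characteristic zero; genericity of `θ`
then forces `U = 0` or `U = W`.
-/

open Module

section MomentMap

variable {k : Type*} [Field k] {V A : Type*} [Fintype A] [DecidableEq V]
  (hd tl : A → V) {W : V → Type*} [∀ v, AddCommGroup (W v)] [∀ v, Module k (W v)]

theorem sum_apply_sum_pi_single [Fintype V] {ι N : Type*} [Fintype ι] {M : V → Type*}
    [∀ v, AddCommMonoid (M v)] [AddCommMonoid N] (T : ∀ v, M v →+ N) (i : ι → V)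
    (x : ∀ a, M (i a)) :
    ∑ v, T v ((∑ a, Pi.single (M := M) (i a) (x a)) v) = ∑ a, T (i a) (x a) := by
  simp only [Finset.sum_apply, map_sum]
  rw [Finset.sum_comm]
  refine Finset.sum_congr rfl fun a _ => ?_
  rw [Fintype.sum_eq_single (i a) fun v hv => by rw [Pi.single_eq_of_ne hv, map_zero],
    Pi.single_eq_same]

/-- The left-hand side `∑_{h(a)=v} φ_a ψ_a - ∑_{t(a)=v} ψ_a φ_a` of the relations `R_η`. -/
def momentMap (φ : ∀ a, W (tl a) →ₗ[k] W (hd a)) (ψ : ∀ a, W (hd a) →ₗ[k] W (tl a)) :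
    ∀ v, W v →ₗ[k] W v :=
  ∑ a, Pi.single (M := fun v => W v →ₗ[k] W v) (hd a) ((φ a).comp (ψ a))
    - ∑ a, Pi.single (M := fun v => W v →ₗ[k] W v) (tl a) ((ψ a).comp (φ a))

variable {hd tl}

theorem sum_trace_momentMap [Fintype V] [∀ v, FiniteDimensional k (W v)]
    (φ : ∀ a, W (tl a) →ₗ[k] W (hd a)) (ψ : ∀ a, W (hd a) →ₗ[k] W (tl a)) :
    ∑ v, LinearMap.trace k (W v) (momentMap hd tl φ ψ v) = 0 := by
  have sum_trace (i : A → V) (X : ∀ a, W (i a) →ₗ[k] W (i a)) :=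
    sum_apply_sum_pi_single (fun v => (LinearMap.trace k (W v)).toAddMonoidHom) i X
  simp only [LinearMap.toAddMonoidHom_coe] at sum_trace
  simp only [momentMap, Pi.sub_apply, map_sub, Finset.sum_sub_distrib, sum_trace]
  exact sub_eq_zero.mpr (Finset.sum_congr rfl fun a _ => LinearMap.trace_comp_comm' _ _)

theorem sum_mul_finrank_eq_zero_of_momentMap_eq [Fintype V] [∀ v, FiniteDimensional k (W v)]
    {φ : ∀ a, W (tl a) →ₗ[k] W (hd a)} {ψ : ∀ a, W (hd a) →ₗ[k] W (tl a)} {η : V → k}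
    (h : ∀ v, momentMap hd tl φ ψ v = η v • LinearMap.id) :
    ∑ v, η v * (finrank k (W v) : k) = 0 := by
  simpa only [h, map_smul, LinearMap.trace_id, smul_eq_mul] using sum_trace_momentMap φ ψ

theorem coe_momentMap_restrict_apply {φ : ∀ a, W (tl a) →ₗ[k] W (hd a)}
    {ψ : ∀ a, W (hd a) →ₗ[k] W (tl a)} (U : ∀ v, Submodule k (W v))
    (hφ : ∀ a, ∀ x ∈ U (tl a), φ a x ∈ U (hd a)) (hψ : ∀ a, ∀ x ∈ U (hd a), ψ a x ∈ U (tl a))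
    (v : V) (x : U v) :
    (momentMap (W := fun v => U v) hd tl (fun a => (φ a).restrict (hφ a))
        (fun a => (ψ a).restrict (hψ a)) v x : W v)
      = momentMap hd tl φ ψ v x := by
  have single_apply (i : A → V) (X : ∀ a, W (i a) →ₗ[k] W (i a))
      (Y : ∀ a, U (i a) →ₗ[k] U (i a)) (hXY : ∀ a y, (Y a y : W (i a)) = X a y) (a : A) :
      (Pi.single (M := fun v => U v →ₗ[k] U v) (i a) (Y a) v x : W v)
        = Pi.single (M := fun v => W v →ₗ[k] W v) (i a) (X a) v x := by
    obtain rfl | hv := eq_or_ne (i a) v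
    · simp only [Pi.single_eq_same, hXY]
    · simp only [Pi.single_eq_of_ne' hv, LinearMap.zero_apply, ZeroMemClass.coe_zero]
  simp only [momentMap, Pi.sub_apply, Finset.sum_apply, LinearMap.sub_apply, LinearMap.sum_apply,
    Submodule.coe_sub, Submodule.coe_sum]
  congr 1
  · exact Finset.sum_congr rfl fun a _ => single_apply hd (fun a => (φ a).comp (ψ a))
      (fun a => ((φ a).restrict (hφ a)).comp ((ψ a).restrict (hψ a))) (fun _ _ => rfl) a
  · exact Finset.sum_congr rfl fun a _ => single_apply tl (fun a => (ψ a).comp (φ a))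
      (fun a => ((ψ a).restrict (hψ a)).comp ((φ a).restrict (hφ a))) (fun _ _ => rfl) a

theorem sum_mul_finrank_eq_zero_of_subrepresentation [Fintype V] [∀ v, FiniteDimensional k (W v)]
    {φ : ∀ a, W (tl a) →ₗ[k] W (hd a)} {ψ : ∀ a, W (hd a) →ₗ[k] W (tl a)} {η : V → k}
    (h : ∀ v, momentMap hd tl φ ψ v = η v • LinearMap.id) (U : ∀ v, Submodule k (W v))
    (hφ : ∀ a, ∀ x ∈ U (tl a), φ a x ∈ U (hd a)) (hψ : ∀ a, ∀ x ∈ U (hd a), ψ a x ∈ U (tl a)) :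
    ∑ v, η v * (finrank k (U v) : k) = 0 := by
  have h_restrict : ∀ v, momentMap (W := fun v => U v) hd tl (fun a => (φ a).restrict (hφ a))
      (fun a => (ψ a).restrict (hψ a)) v = η v • LinearMap.id := fun v =>
    LinearMap.ext fun x => Subtype.ext <| by simp [coe_momentMap_restrict_apply U hφ hψ v x, h]
  exact sum_mul_finrank_eq_zero_of_momentMap_eq h_restrict

end MomentMap

theorem eq_bot_or_eq_top_of_sum_mul_finrank_eq_zero {k V : Type*} [Field k] [Fintype V]
    {W : V → Type*} [∀ v, AddCommGroup (W v)] [∀ v, Module k (W v)]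
    [∀ v, FiniteDimensional k (W v)] {d : V → ℕ} (hdim : ∀ v, finrank k (W v) = d v)
    {θ : V → ℤ}
    (hgen : ∀ d' : V → ℕ, d' ≠ 0 → d' ≠ d → (∀ v, d' v ≤ d v) → ∑ v, θ v * (d' v : ℤ) ≠ 0)
    (U : ∀ v, Submodule k (W v)) (hU : ∑ v, θ v * (finrank k (U v) : ℤ) = 0) :
    (∀ v, U v = ⊥) ∨ (∀ v, U v = ⊤) := by
  by_contra! hne
  obtain ⟨⟨v₀, hv₀⟩, ⟨v₁, hv₁⟩⟩ := hne
  refine hgen (fun v => finrank k (U v)) (fun h => hv₀ ?_) (fun h => hv₁ ?_)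
    (fun v => hdim v ▸ Submodule.finrank_le _) hU
  · exact Submodule.finrank_eq_zero.mp (congrFun h v₀)
  · exact Submodule.eq_top_of_finrank_eq ((congrFun h v₁).trans (hdim v₁).symm)

theorem stmt_6_general (k : Type) [Field k] [CharZero k]
    (V A : Type) [Fintype V] [Fintype A] [DecidableEq V]
    (hd tl : A → V) (d : V → ℕ) (θ : V → ℤ)
    -- θ is generic with respect to d:
    (hgen : ∀ d' : V → ℕ, d' ≠ 0 → d' ≠ d → (∀ v, d' v ≤ d v) →
      ∑ v, θ v * (d' v : ℤ) ≠ 0)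
    -- a d-dimensional representation of the doubled quiver:
    (W : V → Type)
    [∀ v, AddCommGroup (W v)] [∀ v, Module k (W v)] [∀ v, FiniteDimensional k (W v)]
    (hdim : ∀ v, Module.finrank k (W v) = d v)
    (φ : ∀ a, W (tl a) →ₗ[k] W (hd a)) (ψ : ∀ a, W (hd a) →ₗ[k] W (tl a))
    -- satisfying the relations R_θ (θ regarded in k):
    (hrel : ∀ v,
      (∑ a, Pi.single (M := fun v => W v →ₗ[k] W v) (hd a) ((φ a).comp (ψ a))) v
        - (∑ a, Pi.single (M := fun v => W v →ₗ[k] W v) (tl a) ((ψ a).comp (φ a))) v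
      = ((θ v : k)) • (LinearMap.id : W v →ₗ[k] W v)) :
    -- it has no subrepresentations other than 0 and itself:
    (∀ U : ∀ v, Submodule k (W v),
      (∀ a, ∀ x ∈ U (tl a), φ a x ∈ U (hd a)) →
      (∀ a, ∀ x ∈ U (hd a), ψ a x ∈ U (tl a)) →
      (∀ v, U v = ⊥) ∨ (∀ v, U v = ⊤)) ∧
    -- in particular it is θ-stable:
    (∀ U : ∀ v, Submodule k (W v),
      (∀ a, ∀ x ∈ U (tl a), φ a x ∈ U (hd a)) →
      (∀ a, ∀ x ∈ U (hd a), ψ a x ∈ U (tl a)) →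
      (¬ ∀ v, U v = ⊥) → (¬ ∀ v, U v = ⊤) →
      0 < ∑ v, θ v * (Module.finrank k (U v) : ℤ)) := by
  have h_bot_or_top : ∀ U : ∀ v, Submodule k (W v),
      (∀ a, ∀ x ∈ U (tl a), φ a x ∈ U (hd a)) →
      (∀ a, ∀ x ∈ U (hd a), ψ a x ∈ U (tl a)) →
      (∀ v, U v = ⊥) ∨ (∀ v, U v = ⊤) := by
    intro U hφ hψ
    have hU := sum_mul_finrank_eq_zero_of_subrepresentation (η := fun v => (θ v : k)) hrel U hφ hψ
    exact eq_bot_or_eq_top_of_sum_mul_finrank_eq_zero hdim hgen U (by exact_mod_cast hU)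
  exact ⟨h_bot_or_top, fun U hφ hψ hbot htop => ((h_bot_or_top U hφ hψ).elim hbot htop).elim⟩

/-- Let `θ` be generic with respect to `d` and `k` a field of
characteristic zero. Then every `d`-dimensional `k`-representation of the doubled quiver
`Q̄` satisfying the relations `R_θ` has no subrepresentations other than `0` and itself;
in particular every such representation is θ-stable. -/
theorem stmt_6 (k : Type) [Field k] [CharZero k]
    (V A : Type) [Fintype V] [Fintype A] [DecidableEq V]
    (hd tl : A → V) (d : V → ℕ) (θ : V → ℤ)
    -- θ is generic with respect to d:
    (hθd : ∑ v, θ v * (d v : ℤ) = 0)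
    (hgen : ∀ d' : V → ℕ, d' ≠ 0 → d' ≠ d → (∀ v, d' v ≤ d v) →
      ∑ v, θ v * (d' v : ℤ) ≠ 0)
    -- a d-dimensional representation of the doubled quiver:
    (W : V → Type)
    [∀ v, AddCommGroup (W v)] [∀ v, Module k (W v)] [∀ v, FiniteDimensional k (W v)]
    (hdim : ∀ v, Module.finrank k (W v) = d v)
    (φ : ∀ a, W (tl a) →ₗ[k] W (hd a)) (ψ : ∀ a, W (hd a) →ₗ[k] W (tl a))
    -- satisfying the relations R_θ (θ regarded in k):
    (hrel : ∀ v,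
      (∑ a, Pi.single (M := fun v => W v →ₗ[k] W v) (hd a) ((φ a).comp (ψ a))) v
        - (∑ a, Pi.single (M := fun v => W v →ₗ[k] W v) (tl a) ((ψ a).comp (φ a))) v
      = ((θ v : k)) • (LinearMap.id : W v →ₗ[k] W v)) :
    -- it has no subrepresentations other than 0 and itself:
    (∀ U : ∀ v, Submodule k (W v),
      (∀ a, ∀ x ∈ U (tl a), φ a x ∈ U (hd a)) →
      (∀ a, ∀ x ∈ U (hd a), ψ a x ∈ U (tl a)) →
      (∀ v, U v = ⊥) ∨ (∀ v, U v = ⊤)) ∧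
    -- in particular it is θ-stable:
    (∀ U : ∀ v, Submodule k (W v),
      (∀ a, ∀ x ∈ U (tl a), φ a x ∈ U (hd a)) →
      (∀ a, ∀ x ∈ U (hd a), ψ a x ∈ U (tl a)) →
      (¬ ∀ v, U v = ⊥) → (¬ ∀ v, U v = ⊤) →
      0 < ∑ v, θ v * (Module.finrank k (U v) : ℤ)) :=
  stmt_6_general k V A hd tl d θ hgen W hdim φ ψ hrel
end

section
/- Let F_q be a finite field with q elements, Q a quiver, and W an absolutely indecomposable finite-dimensional F_q-representation of Q. Then the residue field End_Q(W) / End_Q^nil(W) is isomorphic to F_q, and the cardinalities satisfy (q − 1) · |End_Q(W)| = q · |Aut_Q(W)|. -/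
/-!
Base-change an endomorphism `f` of `W` to `K = k̄`. For an eigenvalue `c` at some vertex, the
generalized `c`-eigenspaces and the sum of the other generalized eigenspaces are complementary
subrepresentations of `K ⊗ W`, so by indecomposability `f ⊗ K - c` is nilpotent. Raising to a
`p`-power, `f ^ p ^ m` becomes the scalar `c ^ p ^ m`, which therefore lies in `k`, and since `k`
is perfect so does `c`; faithful flatness brings nilpotence of `f - c` back down to `k`. Thus
every endomorphism is a unique scalar plus a nilpotent, it is invertible iff the scalar is
nonzero, and `End_Q(W) ≅ k × End_Q^nil(W)` restricts to `Aut_Q(W) ≅ kˣ × End_Q^nil(W)`.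
-/

open scoped TensorProduct

section ScalarAddNilpotent

variable {k A : Type*} [Field k] [Ring A] [Algebra k A] [Nontrivial A]

theorem eq_of_isNilpotent_sub_smul_one {a : A} {c d : k} (hc : IsNilpotent (a - c • 1))
    (hd : IsNilpotent (a - d • 1)) : c = d := by
  simp only [← Algebra.algebraMap_eq_smul_one] at hc hd
  have hcomm : Commute (a - algebraMap k A d) (a - algebraMap k A c) :=
    ((Commute.refl a).sub_right (Algebra.commute_algebraMap_right c a)).sub_left
      ((Algebra.commute_algebraMap_left d a).sub_right (Algebra.commute_algebraMap_left d _))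
  have hdiff := hcomm.isNilpotent_sub hd hc
  rw [sub_sub_sub_cancel_left, ← map_sub, IsNilpotent.map_iff (algebraMap k A).injective,
    isNilpotent_iff_eq_zero] at hdiff
  exact sub_eq_zero.mp hdiff

theorem isUnit_iff_ne_zero_of_isNilpotent_sub_smul_one {a : A} {c : k}
    (h : IsNilpotent (a - c • 1)) : IsUnit a ↔ c ≠ 0 := by
  refine ⟨?_, fun hc => ?_⟩
  · rintro ha rfl
    rw [zero_smul, sub_zero] at h
    exact h.not_isUnit ha
  · rw [← Algebra.algebraMap_eq_smul_one] at h
    simpa using h.isUnit_add_right_of_commute ((IsUnit.mk0 c hc).map (algebraMap k A))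
      ((Algebra.commute_algebraMap_right c a).sub_left (Commute.refl _))

namespace Subalgebra

variable (S : Subalgebra k A) (hS : ∀ a ∈ S, ∃ c : k, IsNilpotent (a - c • 1))
include hS

noncomputable def scalarAddNilpotentEquiv : k × {a // a ∈ S ∧ IsNilpotent a} ≃ S :=
  Equiv.ofBijective (fun p => ⟨p.1 • 1 + p.2, S.add_mem (S.smul_mem S.one_mem _) p.2.2.1⟩) <| by
    refine ⟨fun ⟨c, n⟩ ⟨d, m⟩ h => ?_, fun a => ?_⟩
    · have h : c • 1 + (n : A) = d • 1 + m := congrArg Subtype.val h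
      obtain rfl : c = d := by
        refine eq_of_isNilpotent_sub_smul_one (a := c • (1 : A) + n) ?_ ?_
        · simpa using n.2.2
        · simpa [h] using m.2.2
      rw [add_right_inj] at h
      rw [Subtype.ext h]
    · obtain ⟨c, hc⟩ := hS a a.2
      exact ⟨⟨c, a - c • 1, S.sub_mem a.2 (S.smul_mem S.one_mem _), hc⟩, by ext; simp⟩

@[simp]
theorem coe_scalarAddNilpotentEquiv_apply (p : k × {a // a ∈ S ∧ IsNilpotent a}) :
    (S.scalarAddNilpotentEquiv hS p : A) = p.1 • 1 + p.2 :=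
  rfl

theorem nat_card_eq_mul_nat_card_isNilpotent :
    Nat.card S = Nat.card k * Nat.card {a // a ∈ S ∧ IsNilpotent a} := by
  rw [← Nat.card_prod, Nat.card_congr (S.scalarAddNilpotentEquiv hS)]

theorem nat_card_isUnit_eq_mul_nat_card_isNilpotent :
    Nat.card {a // a ∈ S ∧ IsUnit a} =
      (Nat.card k - 1) * Nat.card {a // a ∈ S ∧ IsNilpotent a} := by
  rw [← Nat.card_congr (Equiv.subtypeSubtypeEquivSubtypeInter (· ∈ S) IsUnit),
    ← Nat.card_congr ((S.scalarAddNilpotentEquiv hS).subtypeEquiv (p := fun p => p.1 ≠ 0)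
      (q := fun s : S => IsUnit (s : A))
      fun p => (isUnit_iff_ne_zero_of_isNilpotent_sub_smul_one (by simpa using p.2.2.2)).symm),
    Nat.card_congr (Equiv.prodSubtypeFstEquivSubtypeProd (p := fun c : k => c ≠ 0)),
    Nat.card_prod, ← Nat.card_units, Nat.card_congr unitsEquivNeZero]

end Subalgebra

end ScalarAddNilpotent

theorem Pi.isNilpotent_of_forall {ι : Type*} [Finite ι] {R : ι → Type*}
    [∀ i, MonoidWithZero (R i)] {x : ∀ i, R i} (h : ∀ i, IsNilpotent (x i)) : IsNilpotent x := by
  choose n hn using h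
  have := Fintype.ofFinite ι
  refine ⟨∑ i, n i, funext fun i => ?_⟩
  rw [Pi.pow_apply, pow_eq_zero_of_le (Finset.single_le_sum (by simp) (Finset.mem_univ i)) (hn i)]
  rfl

namespace Module.End

theorem maxGenEigenspace_le_comap_of_comp_eq {R M N : Type*} [CommRing R] [AddCommGroup M]
    [Module R M] [AddCommGroup N] [Module R N] {f : End R M} {g : End R N} {φ : M →ₗ[R] N}
    (h : g ∘ₗ φ = φ ∘ₗ f) (μ : R) : f.maxGenEigenspace μ ≤ (g.maxGenEigenspace μ).comap φ := by
  intro x hx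
  rw [Submodule.mem_comap, mem_maxGenEigenspace] at *
  obtain ⟨n, hn⟩ := hx
  have hcomm : (g - μ • 1) ∘ₗ φ = φ ∘ₗ (f - μ • 1) := by
    rw [LinearMap.sub_comp, LinearMap.comp_sub, h, LinearMap.smul_comp, LinearMap.comp_smul]
    rfl
  refine ⟨n, ?_⟩
  rw [← LinearMap.comp_apply, commute_pow_left_of_commute hcomm, LinearMap.comp_apply, hn,
    map_zero]

variable {K M : Type*} [Field K] [AddCommGroup M] [Module K M] [FiniteDimensional K M]

theorem isNilpotent_sub_smul_one_of_maxGenEigenspace_eq_top {f : End K M} {μ : K}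
    (h : f.maxGenEigenspace μ = ⊤) : IsNilpotent (f - μ • 1) :=
  ⟨Module.finrank K M, by
    rwa [maxGenEigenspace_eq_genEigenspace_finrank, genEigenspace_nat, LinearMap.ker_eq_top] at h⟩

theorem isCompl_maxGenEigenspace_iSup_maxGenEigenspace [IsAlgClosed K] (f : End K M) (μ : K) :
    IsCompl (f.maxGenEigenspace μ) (⨆ ν, ⨆ (_ : ν ≠ μ), f.maxGenEigenspace ν) :=
  ⟨f.independent_maxGenEigenspace μ,
    codisjoint_iff.mpr ((iSup_split_single _ μ).symm.trans f.iSup_maxGenEigenspace_eq_top)⟩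

end Module.End

theorem LinearMap.eq_zero_of_baseChange_eq_zero {R S M N : Type*} [CommRing R] [CommRing S]
    [Algebra R S] [Module.FaithfullyFlat R S] [AddCommGroup M] [Module R M] [AddCommGroup N]
    [Module R N] {f : M →ₗ[R] N} (h : f.baseChange S = 0) : f = 0 := by
  rw [Module.FaithfullyFlat.zero_iff_lTensor_zero R S]
  refine LinearMap.ext fun x => ?_
  rw [← LinearMap.baseChange_eq_ltensor, h]
  rfl

theorem Module.End.isNilpotent_of_isNilpotent_baseChange {R S M : Type*} [CommRing R]
    [CommRing S] [Algebra R S] [Module.FaithfullyFlat R S] [AddCommGroup M] [Module R M]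
    {f : Module.End R M} (h : IsNilpotent (f.baseChange S)) : IsNilpotent f := by
  obtain ⟨n, hn⟩ := h
  exact ⟨n, LinearMap.eq_zero_of_baseChange_eq_zero (S := S) (by rwa [LinearMap.baseChange_pow])⟩

section ScalarDescent

variable {k M : Type*} [Field k] [AddCommGroup M] [Module k M] [FiniteDimensional k M]
  [Nontrivial M]

theorem Module.End.mem_range_algebraMap_of_baseChange_eq_smul_one {K : Type*} [CommRing K]
    [Algebra k K] {f : Module.End k M} {c : K} (h : f.baseChange K = c • 1) :
    c ∈ (algebraMap k K).range := by
  let b := Module.finBasis k M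
  let i : Fin (Module.finrank k M) := ⟨0, Module.finrank_pos⟩
  refine ⟨LinearMap.toMatrix b b f i i, ?_⟩
  simpa using congr(LinearMap.toMatrix (Algebra.TensorProduct.basis K b)
    (Algebra.TensorProduct.basis K b) $h i i)

theorem Module.End.mem_range_algebraMap_of_isNilpotent_baseChange_sub (p : ℕ) [Fact p.Prime]
    [CharP k p] [PerfectRing k p] {K : Type*} [Field K] [Algebra k K] {f : Module.End k M}
    {c : K} (h : IsNilpotent (f.baseChange K - c • 1)) : c ∈ (algebraMap k K).range := by
  obtain ⟨n, hn⟩ := h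
  obtain ⟨m, hm⟩ : ∃ m, n ≤ p ^ m := ⟨n, (Nat.lt_pow_self (Fact.out : p.Prime).one_lt).le⟩
  have : CharP K p := charP_of_injective_algebraMap (algebraMap k K).injective p
  have : CharP (Module.End K (K ⊗[k] M)) p :=
    charP_of_injective_algebraMap (algebraMap K (Module.End K (K ⊗[k] M))).injective p
  have hpow : (f ^ p ^ m).baseChange K = c ^ p ^ m • 1 := by
    rw [LinearMap.baseChange_pow, ← one_pow (p ^ m), ← smul_pow, ← sub_eq_zero,
      ← sub_pow_char_pow_of_commute (R := Module.End K (K ⊗[k] M)) p m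
        ((Commute.one_right (f.baseChange K)).smul_right c),
      pow_eq_zero_of_le hm hn]
  obtain ⟨a, ha⟩ := mem_range_algebraMap_of_baseChange_eq_smul_one hpow
  obtain ⟨b, rfl⟩ := (iterateFrobeniusEquiv k p m).surjective a
  refine ⟨b, (iterateFrobenius K p m).injective ?_⟩
  simpa [iterateFrobenius_def] using ha

end ScalarDescent

section QuiverRep

variable {V A : Type*} (hd tl : A → V) (X : V → Type*)

def quiverRepEnd (k : Type*) [CommRing k] [∀ v, AddCommGroup (X v)] [∀ v, Module k (X v)]
    (φ : ∀ a, X (tl a) →ₗ[k] X (hd a)) : Subalgebra k (∀ v, Module.End k (X v)) where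
  carrier := {f | ∀ a, (f (hd a)).comp (φ a) = (φ a).comp (f (tl a))}
  mul_mem' {f g} hf hg a := by
    simp only [Pi.mul_apply, Module.End.mul_eq_comp, LinearMap.comp_assoc, hg a]
    rw [← LinearMap.comp_assoc, hf a, LinearMap.comp_assoc]
  add_mem' hf hg a := by
    simp only [Pi.add_apply, LinearMap.add_comp, LinearMap.comp_add, hf a, hg a]
  algebraMap_mem' c a := by
    ext
    simp

/-- The zero representation counts as indecomposable here. -/
def IsIndecomposableRep {K : Type*} [Field K] [∀ v, AddCommGroup (X v)] [∀ v, Module K (X v)]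
    (ψ : ∀ a, X (tl a) →ₗ[K] X (hd a)) : Prop :=
  ∀ U U' : ∀ v, Submodule K (X v),
    (∀ a, ∀ x ∈ U (tl a), ψ a x ∈ U (hd a)) →
    (∀ a, ∀ x ∈ U' (tl a), ψ a x ∈ U' (hd a)) →
    (∀ v, IsCompl (U v) (U' v)) →
    (∀ v, U v = ⊥) ∨ (∀ v, U' v = ⊥)

variable {hd tl X}

theorem IsIndecomposableRep.exists_forall_isNilpotent_sub_smul_one {K : Type*} [Field K]
    [IsAlgClosed K] [∀ v, AddCommGroup (X v)] [∀ v, Module K (X v)]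
    [∀ v, FiniteDimensional K (X v)] {ψ : ∀ a, X (tl a) →ₗ[K] X (hd a)}
    (hψ : IsIndecomposableRep hd tl X ψ) (v₀ : V) [Nontrivial (X v₀)]
    {F : ∀ v, Module.End K (X v)} (hF : F ∈ quiverRepEnd hd tl X K ψ) :
    ∃ c : K, ∀ v, IsNilpotent (F v - c • 1) := by
  obtain ⟨c, hc⟩ := Module.End.exists_eigenvalue (F v₀)
  let U' v := ⨆ μ, ⨆ (_ : μ ≠ c), (F v).maxGenEigenspace μ
  have hU' a : U' (tl a) ≤ (U' (hd a)).comap (ψ a) :=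
    iSup₂_le fun μ hμ => (Module.End.maxGenEigenspace_le_comap_of_comp_eq (hF a) μ).trans
      (Submodule.comap_mono (le_iSup₂ (f := fun μ (_ : μ ≠ c) => (F (hd a)).maxGenEigenspace μ)
        μ hμ))
  have hcompl v : IsCompl ((F v).maxGenEigenspace c) (U' v) :=
    (F v).isCompl_maxGenEigenspace_iSup_maxGenEigenspace c
  rcases hψ _ U' (fun a => Module.End.maxGenEigenspace_le_comap_of_comp_eq (hF a) c) hU'
    hcompl with hbot | hbot
  · exact absurd (hbot v₀) (ne_bot_of_le_ne_bot hc Module.End.eigenspace_le_maxGenEigenspace)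
  · refine ⟨c, fun v => Module.End.isNilpotent_sub_smul_one_of_maxGenEigenspace_eq_top ?_⟩
    simpa [hbot v] using (hcompl v).sup_eq_top

theorem exists_isNilpotent_sub_smul_one_of_isIndecomposableRep_baseChange {k : Type*} [Field k]
    (p : ℕ) [Fact p.Prime] [CharP k p] [PerfectRing k p] (K : Type*) [Field K] [Algebra k K]
    [IsAlgClosed K] [Finite V] {W : V → Type*} [∀ v, AddCommGroup (W v)] [∀ v, Module k (W v)]
    [∀ v, FiniteDimensional k (W v)] {φ : ∀ a, W (tl a) →ₗ[k] W (hd a)}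
    (hφ : IsIndecomposableRep hd tl (fun v => K ⊗[k] W v) fun a => (φ a).baseChange K)
    (v₀ : V) [Nontrivial (W v₀)] {f : ∀ v, Module.End k (W v)}
    (hf : f ∈ quiverRepEnd hd tl W k φ) : ∃ c : k, IsNilpotent (f - c • 1) := by
  obtain ⟨c, hc⟩ := hφ.exists_forall_isNilpotent_sub_smul_one v₀
    (F := fun v => (f v).baseChange K) fun a => by
      rw [← LinearMap.baseChange_comp, hf a, LinearMap.baseChange_comp]
  obtain ⟨c, rfl⟩ := Module.End.mem_range_algebraMap_of_isNilpotent_baseChange_sub p (hc v₀)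
  refine ⟨c, Pi.isNilpotent_of_forall fun v => ?_⟩
  refine Module.End.isNilpotent_of_isNilpotent_baseChange (S := K) ?_
  simpa [LinearMap.baseChange_sub, LinearMap.baseChange_smul, algebraMap_smul] using hc v

end QuiverRep

theorem stmt_9_general (k : Type) [Field k] [Fintype k] (V A : Type) [Fintype V]
    (hd tl : A → V)
    (W : V → Type)
    [∀ v, AddCommGroup (W v)] [∀ v, Module k (W v)] [∀ v, FiniteDimensional k (W v)]
    (φ : ∀ a, W (tl a) →ₗ[k] W (hd a))
    -- W ⊗ k̄ is nonzero
    (habs0 : ∃ v, ∃ x : AlgebraicClosure k ⊗[k] W v, x ≠ 0)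
    -- W ⊗ k̄ is indecomposable
    (habs : ∀ U U' : ∀ v, Submodule (AlgebraicClosure k) (AlgebraicClosure k ⊗[k] W v),
      (∀ a, ∀ x ∈ U (tl a), (φ a).baseChange (AlgebraicClosure k) x ∈ U (hd a)) →
      (∀ a, ∀ x ∈ U' (tl a), (φ a).baseChange (AlgebraicClosure k) x ∈ U' (hd a)) →
      (∀ v, IsCompl (U v) (U' v)) →
      (∀ v, U v = ⊥) ∨ (∀ v, U' v = ⊥)) :
    -- the residue field End_Q(W)/End_Q^nil(W) is F_q:
    (∀ f : ∀ v, Module.End k (W v),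
      (∀ a, (f (hd a)).comp (φ a) = (φ a).comp (f (tl a))) →
      ∃! c : k, IsNilpotent (f - c • (1 : ∀ v, Module.End k (W v)))) ∧
    -- (q − 1) · |End_Q(W)| = q · |Aut_Q(W)|:
    (Fintype.card k - 1) *
        Nat.card {f : ∀ v, Module.End k (W v) //
          ∀ a, (f (hd a)).comp (φ a) = (φ a).comp (f (tl a))}
      = Fintype.card k *
        Nat.card {f : ∀ v, Module.End k (W v) //
          (∀ a, (f (hd a)).comp (φ a) = (φ a).comp (f (tl a))) ∧
          ∀ v, Function.Bijective (f v)} := by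
  have : Fact (ringChar k).Prime := ⟨CharP.char_is_prime k _⟩
  obtain ⟨v₀, x, hx⟩ := habs0
  have : Nontrivial (W v₀) := (Module.FaithfullyFlat.nontrivial_tensorProduct_iff_right k
    (AlgebraicClosure k)).mp (nontrivial_of_ne x 0 hx)
  have : Nontrivial (∀ v, Module.End k (W v)) := Pi.nontrivial_at v₀
  let S := quiverRepEnd hd tl W k φ
  have hS f (hf : f ∈ S) : ∃ c : k, IsNilpotent (f - c • 1) :=
    exists_isNilpotent_sub_smul_one_of_isIndecomposableRep_baseChange (ringChar k)
      (AlgebraicClosure k) habs v₀ hf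
  refine ⟨fun f hf => existsUnique_of_exists_of_unique (hS f hf)
    fun _ _ => eq_of_isNilpotent_sub_smul_one, ?_⟩
  have hAut : Nat.card {f : ∀ v, Module.End k (W v) //
      (∀ a, (f (hd a)).comp (φ a) = (φ a).comp (f (tl a))) ∧ ∀ v, Function.Bijective (f v)} =
      Nat.card {f // f ∈ S ∧ IsUnit f} :=
    Nat.card_congr <| Equiv.subtypeEquivRight fun f => and_congr_right' <| by
      simp only [Pi.isUnit_iff, Module.End.isUnit_iff]
  rw [hAut, S.nat_card_isUnit_eq_mul_nat_card_isNilpotent hS, ← Nat.card_eq_fintype_card,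
    mul_left_comm]
  exact congrArg _ (S.nat_card_eq_mul_nat_card_isNilpotent hS)

/-- Let `F_q` be a finite field with `q` elements and `W` an absolutely
indecomposable finite-dimensional `F_q`-representation of a quiver `Q` (i.e. the base
change of `W` to the algebraic closure is indecomposable). Then the residue field
`End_Q(W)/End_Q^nil(W)` is `F_q` itself — every endomorphism is, modulo a nilpotent, a
unique scalar — and `(q − 1) · |End_Q(W)| = q · |Aut_Q(W)|`. -/
theorem stmt_9 (k : Type) [Field k] [Fintype k] (V A : Type) [Fintype V] [Fintype A]
    (hd tl : A → V)
    (W : V → Type)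
    [∀ v, AddCommGroup (W v)] [∀ v, Module k (W v)] [∀ v, FiniteDimensional k (W v)]
    (φ : ∀ a, W (tl a) →ₗ[k] W (hd a))
    -- W ⊗ k̄ is nonzero
    (habs0 : ∃ v, ∃ x : AlgebraicClosure k ⊗[k] W v, x ≠ 0)
    -- W ⊗ k̄ is indecomposable
    (habs : ∀ U U' : ∀ v, Submodule (AlgebraicClosure k) (AlgebraicClosure k ⊗[k] W v),
      (∀ a, ∀ x ∈ U (tl a), (φ a).baseChange (AlgebraicClosure k) x ∈ U (hd a)) →
      (∀ a, ∀ x ∈ U' (tl a), (φ a).baseChange (AlgebraicClosure k) x ∈ U' (hd a)) →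
      (∀ v, IsCompl (U v) (U' v)) →
      (∀ v, U v = ⊥) ∨ (∀ v, U' v = ⊥)) :
    -- the residue field End_Q(W)/End_Q^nil(W) is F_q:
    (∀ f : ∀ v, Module.End k (W v),
      (∀ a, (f (hd a)).comp (φ a) = (φ a).comp (f (tl a))) →
      ∃! c : k, IsNilpotent (f - c • (1 : ∀ v, Module.End k (W v)))) ∧
    -- (q − 1) · |End_Q(W)| = q · |Aut_Q(W)|:
    (Fintype.card k - 1) *
        Nat.card {f : ∀ v, Module.End k (W v) //
          ∀ a, (f (hd a)).comp (φ a) = (φ a).comp (f (tl a))}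
      = Fintype.card k *
        Nat.card {f : ∀ v, Module.End k (W v) //
          (∀ a, (f (hd a)).comp (φ a) = (φ a).comp (f (tl a))) ∧
          ∀ v, Function.Bijective (f v)} :=
  stmt_9_general k V A hd tl W φ habs0 habs
end

section
/- Let k be a field, Q = (V, A, h, t) a quiver, θ ∈ ℤ^V (regarded in k), and W = ((W_v), (φ_a)) a finite-dimensional k-representation of Q with dimension vector d. Define the k-linear map L_W : ∏_{a∈A} Hom_k(W_{h(a)}, W_{t(a)}) → ∏_{v∈V} End_k(W_v) by L_W((ψ_{a*})_{a∈A}) := (Σ_{a∈A, h(a)=v} φ_a ∘ ψ_{a*} − Σ_{a∈A, t(a)=v} ψ_{a*} ∘ φ_a)_{v∈V}. Then the set of tuples (φ_{a*}) such that ((W_v), (φ_a), (φ_{a*})) satisfies the relations R_θ is either empty or a coset of ker L_W, and dim_k ker L_W = dim_k End_Q(W) − ⟨d, d⟩_Q. -/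
/-!
The coset statement holds for any linear map: `L ψ = L ψ₀` iff `ψ - ψ₀ ∈ ker L`.

For the dimension formula, the trace pairings `(f, g) ↦ Σ tr (f ∘ g)` identify
`∏_v End(W_v)` with its own dual and `∏_a Hom(W_{t a}, W_{h a})` with the dual of
`∏_a Hom(W_{h a}, W_{t a})`. By cyclicity of the trace, the transpose of `L_W` becomes
`f ↦ (f_{h a} ∘ φ_a − φ_a ∘ f_{t a})_a`, whose kernel is `End_Q(W)`. Hence `L_W` and this map
have the same rank, and rank–nullity for both gives
`dim ker L_W = dim End_Q(W) − Σ_v d_v² + Σ_a d_{t a} d_{h a}`.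
-/

open LinearMap Module

section TraceDuality

variable {k : Type*} [Field k]

theorem LinearMap.eq_zero_of_forall_trace_comp_eq_zero {U X : Type*}
    [AddCommGroup U] [Module k U] [FiniteDimensional k U] [AddCommGroup X] [Module k X]
    {g : X →ₗ[k] U} (h : ∀ ψ : U →ₗ[k] X, trace k U (g ∘ₗ ψ) = 0) : g = 0 := by
  ext y
  rw [zero_apply, ← forall_dual_apply_eq_zero_iff k]
  intro l
  -- `g ∘ (u ↦ l u • y)` is the rank-one map `l ⊗ g y`, whose trace is `l (g y)`.
  have hrankOne : g ∘ₗ l.smulRight y = dualTensorHom k U U (l ⊗ₜ[k] g y) := by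
    ext u; simp
  simpa [hrankOne, trace_eq_contract_apply] using h (l.smulRight y)

variable {ι : Type*} [Fintype ι] {U X : ι → Type*}
  [∀ i, AddCommGroup (U i)] [∀ i, Module k (U i)] [∀ i, AddCommGroup (X i)] [∀ i, Module k (X i)]

theorem Module.finrank_pi_linearMap [∀ i, FiniteDimensional k (U i)]
    [∀ i, FiniteDimensional k (X i)] :
    finrank k (∀ i, X i →ₗ[k] U i) = ∑ i, finrank k (X i) * finrank k (U i) := by
  simp only [finrank_pi_fintype, finrank_linearMap]

variable [DecidableEq ι]

noncomputable def LinearMap.piTraceDual :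
    (∀ i, X i →ₗ[k] U i) →ₗ[k] Dual k (∀ i, U i →ₗ[k] X i) :=
  (lsum k (fun i => U i →ₗ[k] X i) k).toLinearMap ∘ₗ
    LinearMap.pi fun i => ((llcomp k (U i) (X i) (U i)).compr₂ (trace k (U i))) ∘ₗ proj i

theorem LinearMap.piTraceDual_apply (g : ∀ i, X i →ₗ[k] U i) (ψ : ∀ i, U i →ₗ[k] X i) :
    piTraceDual g ψ = ∑ i, trace k (U i) (g i ∘ₗ ψ i) := by
  simp only [piTraceDual, coe_comp, LinearEquiv.coe_coe, Function.comp_apply, lsum_apply, pi_apply,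
    coe_proj, Function.eval, coe_sum, Finset.sum_apply, compr₂_apply]
  rfl

theorem LinearMap.piTraceDual_injective [∀ i, FiniteDimensional k (U i)] :
    Function.Injective (piTraceDual : (∀ i, X i →ₗ[k] U i) →ₗ[k] Dual k (∀ i, U i →ₗ[k] X i)) := by
  rw [← ker_eq_bot, ker_eq_bot']
  intro g hg
  funext i
  refine eq_zero_of_forall_trace_comp_eq_zero fun ψ => ?_
  have := congr($hg (Pi.single i ψ))
  rwa [piTraceDual, comp_apply, LinearEquiv.coe_coe, lsum_piSingle, pi_apply, comp_apply,
    proj_apply, compr₂_apply, zero_apply] at this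

variable [∀ i, FiniteDimensional k (U i)] [∀ i, FiniteDimensional k (X i)]

noncomputable def LinearMap.piTraceDualEquiv :
    (∀ i, X i →ₗ[k] U i) ≃ₗ[k] Dual k (∀ i, U i →ₗ[k] X i) :=
  have hdim : finrank k (∀ i, X i →ₗ[k] U i) = finrank k (Dual k (∀ i, U i →ₗ[k] X i)) := by
    simp only [Subspace.dual_finrank_eq, finrank_pi_linearMap, mul_comm]
  .ofBijective piTraceDual
    ⟨piTraceDual_injective, (injective_iff_surjective_of_finrank_eq_finrank hdim).mp
      piTraceDual_injective⟩

theorem LinearMap.piTraceDualEquiv_apply (g : ∀ i, X i →ₗ[k] U i) (ψ : ∀ i, U i →ₗ[k] X i) :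
    piTraceDualEquiv g ψ = ∑ i, trace k (U i) (g i ∘ₗ ψ i) :=
  piTraceDual_apply g ψ

end TraceDuality

theorem LinearMap.finrank_range_eq_of_dual_adjoint {k X Y X' Y' : Type*} [Field k]
    [AddCommGroup X] [Module k X] [AddCommGroup Y] [Module k Y] [FiniteDimensional k Y]
    [AddCommGroup X'] [Module k X'] [AddCommGroup Y'] [Module k Y']
    (L : X →ₗ[k] Y) (M : Y' →ₗ[k] X') (eY : Y' ≃ₗ[k] Dual k Y) (eX : X' ≃ₗ[k] Dual k X)
    (h : ∀ f ψ, eY f (L ψ) = eX (M f) ψ) :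
    finrank k (range L) = finrank k (range M) := by
  have hadj : L.dualMap ∘ₗ eY.toLinearMap = eX.toLinearMap ∘ₗ M := by
    ext f ψ; exact h f ψ
  calc finrank k (range L)
      = finrank k (range (L.dualMap ∘ₗ eY.toLinearMap)) := by
        rw [range_comp_of_range_eq_top _ eY.range, finrank_range_dualMap_eq_finrank_range]
    _ = finrank k (range M) := by
        rw [hadj, range_comp, LinearEquiv.finrank_map_eq]

namespace QuiverRep

variable {k V A : Type*} [Field k] {hd tl : A → V}
  {W : V → Type*} [∀ v, AddCommGroup (W v)] [∀ v, Module k (W v)]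
  (φ : ∀ a, W (tl a) →ₗ[k] W (hd a))

def intertwiningDefect : (∀ v, Module.End k (W v)) →ₗ[k] ∀ a, W (tl a) →ₗ[k] W (hd a) where
  toFun f a := f (hd a) ∘ₗ φ a - φ a ∘ₗ f (tl a)
  map_add' f g := by
    funext a
    simp only [Pi.add_apply, add_comp, comp_add]
    abel
  map_smul' c f := by
    funext a
    simp only [Pi.smul_apply, smul_comp, comp_smul, smul_sub, RingHom.id_apply]

theorem intertwiningDefect_apply (f : ∀ v, Module.End k (W v)) (a : A) :
    intertwiningDefect φ f a = f (hd a) ∘ₗ φ a - φ a ∘ₗ f (tl a) :=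
  rfl

theorem mem_ker_intertwiningDefect {f : ∀ v, Module.End k (W v)} :
    f ∈ ker (intertwiningDefect φ) ↔ ∀ a, f (hd a) ∘ₗ φ a = φ a ∘ₗ f (tl a) := by
  simp only [mem_ker, funext_iff, intertwiningDefect_apply, Pi.zero_apply, sub_eq_zero]

variable [Fintype V] [Fintype A] [DecidableEq V]

/-- `L_W ψ`, the left-hand side of the relations `R_θ` for `φ_{a*} := ψ a`. -/
def doubleRelation (ψ : ∀ a, W (hd a) →ₗ[k] W (tl a)) : ∀ v, Module.End k (W v) :=
  ∑ a, Pi.single (hd a) (φ a ∘ₗ ψ a) - ∑ a, Pi.single (tl a) (ψ a ∘ₗ φ a)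

omit [Fintype A] in
theorem sum_trace_mul_single (f : ∀ v, Module.End k (W v)) (w : V) (g : Module.End k (W w)) :
    ∑ v, trace k (W v) (f v * Pi.single (M := fun v => Module.End k (W v)) w g v)
      = trace k (W w) (f w * g) := by
  rw [Fintype.sum_eq_single w fun v hv => by rw [Pi.single_eq_of_ne hv, mul_zero, map_zero],
    Pi.single_eq_same]

theorem sum_trace_comp_doubleRelation [∀ v, FiniteDimensional k (W v)] (f : ∀ v, Module.End k (W v))
    (ψ : ∀ a, W (hd a) →ₗ[k] W (tl a)) :
    ∑ v, trace k (W v) (f v ∘ₗ doubleRelation φ ψ v)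
      = ∑ a, trace k (W (hd a)) (intertwiningDefect φ f a ∘ₗ ψ a) := by
  simp only [doubleRelation, ← Module.End.mul_eq_comp, Pi.sub_apply, Finset.sum_apply, mul_sub,
    Finset.mul_sum, map_sub, map_sum, Finset.sum_sub_distrib]
  rw [Finset.sum_comm, Finset.sum_comm (γ := V)]
  simp only [sum_trace_mul_single, ← Finset.sum_sub_distrib]
  refine Finset.sum_congr rfl fun a _ => ?_
  rw [intertwiningDefect_apply, sub_comp, map_sub, Module.End.mul_eq_comp, Module.End.mul_eq_comp,
    comp_assoc, comp_assoc, ← comp_assoc (φ a), ← trace_comp_comm' (φ a)]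

end QuiverRep

open QuiverRep

/-- For a finite-dimensional `k`-representation `W` of `Q` with
dimension vector `d`, consider the linear map
`L_W : ∏_a Hom(W (hd a), W (tl a)) → ∏_v End(W v)`,
`L_W ψ = (Σ_{a : hd a = v} φ a ∘ ψ a − Σ_{a : tl a = v} ψ a ∘ φ a)_v`.
The set of tuples `(φ_{a*})` such that `((W v), (φ a), (φ_{a*}))` satisfies the relations
`R_θ` is either empty or a coset of `ker L_W`, and
`dim ker L_W = dim End_Q(W) − ⟨d, d⟩_Q`. -/
theorem stmt_13 (k : Type) [Field k] (V A : Type) [Fintype V] [Fintype A] [DecidableEq V]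
    (hd tl : A → V) (θ : V → ℤ)
    (W : V → Type)
    [∀ v, AddCommGroup (W v)] [∀ v, Module k (W v)] [∀ v, FiniteDimensional k (W v)]
    (φ : ∀ a, W (tl a) →ₗ[k] W (hd a))
    -- L is the linear map L_W
    (L : (∀ a, W (hd a) →ₗ[k] W (tl a)) →ₗ[k] (∀ v, W v →ₗ[k] W v))
    (hL : ∀ ψ v, L ψ v
        = (∑ a, Pi.single (M := fun v => W v →ₗ[k] W v) (hd a) ((φ a).comp (ψ a))) v
          - (∑ a, Pi.single (M := fun v => W v →ₗ[k] W v) (tl a) ((ψ a).comp (φ a))) v)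
    -- E is the space of endomorphisms End_Q(W)
    (E : Submodule k (∀ v, W v →ₗ[k] W v))
    (hE : ∀ f, f ∈ E ↔ ∀ a, (f (hd a)).comp (φ a) = (φ a).comp (f (tl a))) :
    -- the set of solutions of the relations R_θ is empty or a coset of ker L:
    (∀ ψ₀ ψ : ∀ a, W (hd a) →ₗ[k] W (tl a),
      (∀ v, L ψ₀ v = ((θ v : k)) • (LinearMap.id : W v →ₗ[k] W v)) →
      ((∀ v, L ψ v = ((θ v : k)) • (LinearMap.id : W v →ₗ[k] W v)) ↔
        ψ - ψ₀ ∈ LinearMap.ker L)) ∧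
    -- dim ker L_W = dim End_Q(W) − ⟨d, d⟩_Q:
    (Module.finrank k (LinearMap.ker L) : ℤ)
      = (Module.finrank k E : ℤ)
        - (∑ v, (Module.finrank k (W v) : ℤ) * (Module.finrank k (W v) : ℤ)
            - ∑ a, (Module.finrank k (W (tl a)) : ℤ) * (Module.finrank k (W (hd a)) : ℤ)) := by
  classical
  refine ⟨fun ψ₀ ψ h₀ => ?_, ?_⟩
  · simp only [sub_mem_ker_iff, funext_iff, h₀]
  have hL' : ∀ ψ, L ψ = doubleRelation φ ψ := fun ψ => funext (hL ψ)
  have hE' : ker (intertwiningDefect φ) = E := by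
    ext f
    rw [mem_ker_intertwiningDefect, hE]
  have hrank : finrank k (range L) = finrank k (range (intertwiningDefect φ)) :=
    finrank_range_eq_of_dual_adjoint L _ piTraceDualEquiv piTraceDualEquiv fun f ψ => by
      rw [piTraceDualEquiv_apply, piTraceDualEquiv_apply, hL', sum_trace_comp_doubleRelation]
  have hL_nullity := L.finrank_range_add_finrank_ker
  have hM_nullity := (intertwiningDefect φ).finrank_range_add_finrank_ker
  rw [hE', finrank_pi_linearMap] at hM_nullity
  rw [finrank_pi_linearMap] at hL_nullity
  simp only [mul_comm (finrank k (W (hd _)))] at hL_nullity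
  zify at hL_nullity hM_nullity hrank
  linarith
end

section
/- Let k be a field with algebraic closure k̄, Q a quiver, θ ∈ ℤ^V, and W a finite-dimensional k-representation of Q such that W ⊗_k k̄ is θ-stable (i.e., W is θ-geometrically stable). Then End_Q(W) = k · id_W; in particular, the stabiliser of W under the conjugation action of GL_d(k) = ∏_{v∈V} GL_{d_v}(k) on d-dimensional representations is the diagonal subgroup Δ = {(t · I_{d_v})_{v∈V} : t ∈ k^×}. -/
/-!
Over `k̄`, the base change `F` of an endomorphism `f` has an eigenvalue `μ` at some vertex. The
kernel and image of `F - μ` are subrepresentations whose `θ`-degrees add up to `θ · dim W = 0`,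
so stability forces `F = μ • 1`. Applying a `k`-linear functional to `F (1 ⊗ x) = μ ⊗ x` shows
`μ ∈ k`, and base change is faithful, so `f = μ • 1` already over `k`.
-/

open scoped TensorProduct

open Module LinearMap

section Representation

variable {R : Type*} [Semiring R] {V A : Type*} {hd tl : A → V} {M : V → Type*}
  [∀ v, AddCommMonoid (M v)] [∀ v, Module R (M v)]

def IsSubrep (ψ : ∀ a, M (tl a) →ₗ[R] M (hd a)) (U : ∀ v, Submodule R (M v)) : Prop :=
  ∀ a, ∀ x ∈ U (tl a), ψ a x ∈ U (hd a)

def IsRepEnd (ψ : ∀ a, M (tl a) →ₗ[R] M (hd a)) (f : ∀ v, Module.End R (M v)) : Prop :=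
  ∀ a, f (hd a) ∘ₗ ψ a = ψ a ∘ₗ f (tl a)

def IsThetaStable [Fintype V] (θ : V → ℤ) (ψ : ∀ a, M (tl a) →ₗ[R] M (hd a)) : Prop :=
  ∑ v, θ v * (finrank R (M v) : ℤ) = 0 ∧
    ∀ U : ∀ v, Submodule R (M v), IsSubrep ψ U → (¬ ∀ v, U v = ⊥) → (¬ ∀ v, U v = ⊤) →
      0 < ∑ v, θ v * (finrank R (U v) : ℤ)

end Representation

section Endomorphism

variable {R : Type*} [CommRing R] {V A : Type*} {hd tl : A → V} {M : V → Type*}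
  [∀ v, AddCommGroup (M v)] [∀ v, Module R (M v)]
  {ψ : ∀ a, M (tl a) →ₗ[R] M (hd a)} {f : ∀ v, Module.End R (M v)}

theorem IsRepEnd.isSubrep_ker (hf : IsRepEnd ψ f) : IsSubrep ψ fun v => ker (f v) := by
  intro a x hx
  rw [mem_ker] at hx ⊢
  rw [← comp_apply, hf a, comp_apply, hx, map_zero]

theorem IsRepEnd.isSubrep_range (hf : IsRepEnd ψ f) : IsSubrep ψ fun v => range (f v) := by
  rintro a _ ⟨y, rfl⟩
  exact ⟨ψ a y, by rw [← comp_apply, hf a, comp_apply]⟩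

theorem IsRepEnd.sub_smul_one (hf : IsRepEnd ψ f) (μ : R) :
    IsRepEnd ψ fun v => f v - μ • 1 := by
  intro a
  simp only [sub_comp, comp_sub, hf a, smul_comp, comp_smul, End.one_eq_id, id_comp, comp_id]

theorem IsRepEnd.baseChange (S : Type*) [CommRing S] [Algebra R S] (hf : IsRepEnd ψ f) :
    IsRepEnd (fun a => (ψ a).baseChange S) fun v => (f v).baseChange S := by
  intro a
  rw [← baseChange_comp, ← baseChange_comp, hf a]

end Endomorphism

section Schur

variable {K : Type*} [Field K] {V A : Type*} [Fintype V] {hd tl : A → V} {M : V → Type*}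
  [∀ v, AddCommGroup (M v)] [∀ v, Module K (M v)] [∀ v, FiniteDimensional K (M v)]
  {θ : V → ℤ} {ψ : ∀ a, M (tl a) →ₗ[K] M (hd a)} {f : ∀ v, Module.End K (M v)}

theorem IsThetaStable.eq_zero_of_not_injective (hs : IsThetaStable θ ψ) (hf : IsRepEnd ψ f)
    (hker : ¬ ∀ v, ker (f v) = ⊥) : ∀ v, f v = 0 := by
  by_contra hne
  have hker_top : ¬ ∀ v, ker (f v) = ⊤ := fun h => hne fun v => ker_eq_top.mp (h v)
  have hrange_bot : ¬ ∀ v, range (f v) = ⊥ := fun h => hne fun v => range_eq_bot.mp (h v)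
  have hrange_top : ¬ ∀ v, range (f v) = ⊤ := fun h => hker fun v =>
    ker_eq_bot.mpr (injective_iff_surjective.mpr (range_eq_top.mp (h v)))
  have hsum : ∑ v, θ v * (finrank K (ker (f v)) : ℤ) + ∑ v, θ v * (finrank K (range (f v)) : ℤ)
      = 0 := by
    rw [← hs.1, ← Finset.sum_add_distrib]
    refine Finset.sum_congr rfl fun v _ => ?_
    rw [← finrank_range_add_finrank_ker (f v)]
    push_cast
    ring
  have := hs.2 _ hf.isSubrep_ker hker hker_top
  have := hs.2 _ hf.isSubrep_range hrange_bot hrange_top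
  omega

theorem IsThetaStable.exists_eq_smul_one [IsAlgClosed K] (hs : IsThetaStable θ ψ)
    (hf : IsRepEnd ψ f) : ∃ μ : K, ∀ v, f v = μ • 1 := by
  obtain ⟨v₀, hv₀⟩ | hM := exists_or_forall_not fun v => Nontrivial (M v)
  · obtain ⟨μ, hμ⟩ := Module.End.exists_eigenvalue (f v₀)
    refine ⟨μ, fun v => sub_eq_zero.mp ?_⟩
    refine hs.eq_zero_of_not_injective (hf.sub_smul_one μ) (fun h => hμ ?_) v
    exact Module.End.eigenspace_def.trans (h v₀)
  · refine ⟨0, fun v => ?_⟩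
    have := not_nontrivial_iff_subsingleton.mp (hM v)
    exact Subsingleton.elim _ _

end Schur

section Descent

variable {k : Type*} [Field k] (K : Type*) [Field K] [Algebra k K]
  {M : Type*} [AddCommGroup M] [Module k M]

theorem Module.End.exists_algebraMap_eq_of_baseChange_eq_smul_one [Nontrivial M]
    {f : Module.End k M} {μ : K} (hf : f.baseChange K = μ • 1) : ∃ c : k, algebraMap k K c = μ := by
  obtain ⟨x, hx⟩ := exists_ne (0 : M)
  obtain ⟨ℓ, hℓ⟩ := Module.Projective.exists_dual_eq_one k hx
  refine ⟨ℓ (f x), ?_⟩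
  have := congrArg (ℓ.baseChange K) (LinearMap.congr_fun hf (1 ⊗ₜ x))
  simpa [hℓ, Algebra.algebraMap_eq_smul_one] using this

theorem Module.End.baseChange_eq_algebraMap_smul_one_iff {f : Module.End k M} {c : k} :
    f.baseChange K = algebraMap k K c • 1 ↔ f = c • 1 := by
  rw [algebraMap_smul, ← baseChange_one, ← baseChange_smul]
  exact (baseChangeHom_injective k M K).eq_iff

variable {V : Type*} {M : V → Type*} [∀ v, AddCommGroup (M v)] [∀ v, Module k (M v)]

theorem exists_eq_smul_one_of_baseChange_eq_smul_one {f : ∀ v, Module.End k (M v)} {μ : K}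
    (hf : ∀ v, (f v).baseChange K = μ • 1) : ∃ c : k, ∀ v, f v = c • 1 := by
  obtain ⟨v₀, hv₀⟩ | hM := exists_or_forall_not fun v => Nontrivial (M v)
  · obtain ⟨c, rfl⟩ := Module.End.exists_algebraMap_eq_of_baseChange_eq_smul_one K (hf v₀)
    exact ⟨c, fun v => (Module.End.baseChange_eq_algebraMap_smul_one_iff K).mp (hf v)⟩
  · refine ⟨0, fun v => ?_⟩
    have := not_nontrivial_iff_subsingleton.mp (hM v)
    exact Subsingleton.elim _ _

end Descent

theorem exists_unit_of_linearEquiv_eq_smul {k V : Type*} [Field k] {M : V → Type*}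
    [∀ v, AddCommGroup (M v)] [∀ v, Module k (M v)] {g : ∀ v, M v ≃ₗ[k] M v} {c : k}
    (hg : ∀ v, (g v : Module.End k (M v)) = c • 1) : ∃ u : kˣ, ∀ v x, g v x = (u : k) • x := by
  obtain ⟨v₀, hv₀⟩ | hM := exists_or_forall_not fun v => Nontrivial (M v)
  · obtain ⟨x, hx⟩ := exists_ne (0 : M v₀)
    have hc : c ≠ 0 := by
      rintro rfl
      exact hx ((g v₀).map_eq_zero_iff.mp (by simpa using LinearMap.congr_fun (hg v₀) x))
    exact ⟨Units.mk0 c hc, fun v x => by simpa using LinearMap.congr_fun (hg v) x⟩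
  · refine ⟨1, fun v x => ?_⟩
    have := not_nontrivial_iff_subsingleton.mp (hM v)
    exact Subsingleton.elim _ _

theorem stmt_18_general (k : Type) [Field k] (V A : Type) [Fintype V]
    (hd tl : A → V) (θ : V → ℤ)
    (W : V → Type)
    [∀ v, AddCommGroup (W v)] [∀ v, Module k (W v)] [∀ v, FiniteDimensional k (W v)]
    (φ : ∀ a, W (tl a) →ₗ[k] W (hd a))
    -- θ · dim W = 0
    (hθdim : ∑ v, θ v * (Module.finrank k (W v) : ℤ) = 0)
    -- W ⊗_k k̄ is θ-stable
    (hgs : ∀ U : ∀ v, Submodule (AlgebraicClosure k) (AlgebraicClosure k ⊗[k] W v),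
      (∀ a, ∀ x ∈ U (tl a), (φ a).baseChange (AlgebraicClosure k) x ∈ U (hd a)) →
      (¬ ∀ v, U v = ⊥) → (¬ ∀ v, U v = ⊤) →
      0 < ∑ v, θ v * (Module.finrank (AlgebraicClosure k) (U v) : ℤ)) :
    -- End_Q(W) = k · id:
    (∀ f : ∀ v, W v →ₗ[k] W v,
      (∀ a, (f (hd a)).comp (φ a) = (φ a).comp (f (tl a))) →
      ∃ c : k, ∀ v, f v = c • (LinearMap.id : W v →ₗ[k] W v)) ∧
    -- the stabiliser of W, i.e. Aut_Q(W), is the diagonal Δ = kˣ · id: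
    (∀ g : ∀ v, W v ≃ₗ[k] W v,
      (∀ a x, g (hd a) (φ a x) = φ a (g (tl a) x)) →
      ∃ c : kˣ, ∀ v x, g v x = (c : k) • x) := by
  set K := AlgebraicClosure k
  have hs : IsThetaStable (M := fun v => K ⊗[k] W v) θ fun a => (φ a).baseChange K :=
    ⟨by simpa only [finrank_baseChange] using hθdim, hgs⟩
  have hend (f : ∀ v, Module.End k (W v)) (hf : IsRepEnd φ f) : ∃ c : k, ∀ v, f v = c • 1 :=
    have ⟨_, hμ⟩ := hs.exists_eq_smul_one (hf.baseChange K)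
    exists_eq_smul_one_of_baseChange_eq_smul_one K hμ
  refine ⟨hend, fun g hg => ?_⟩
  obtain ⟨c, hc⟩ := hend (fun v => g v) fun a => LinearMap.ext (hg a)
  exact exists_unit_of_linearEquiv_eq_smul hc

/-- Let `W` be a `θ`-geometrically stable finite-dimensional
`k`-representation of a quiver `Q`, i.e. the base change of `W` to the algebraic closure
`k̄` is `θ`-stable. Then `End_Q(W) = k · id`; in particular the stabiliser of `W` under
the conjugation action of `GL_d(k)` (equivalently, the automorphism group `Aut_Q(W)`) is
the diagonal subgroup `Δ = {t · id : t ∈ kˣ}`. -/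
theorem stmt_18 (k : Type) [Field k] (V A : Type) [Fintype V] [Fintype A]
    (hd tl : A → V) (θ : V → ℤ)
    (W : V → Type)
    [∀ v, AddCommGroup (W v)] [∀ v, Module k (W v)] [∀ v, FiniteDimensional k (W v)]
    (φ : ∀ a, W (tl a) →ₗ[k] W (hd a))
    -- θ · dim W = 0
    (hθdim : ∑ v, θ v * (Module.finrank k (W v) : ℤ) = 0)
    -- W ⊗_k k̄ is θ-stable
    (hgs : ∀ U : ∀ v, Submodule (AlgebraicClosure k) (AlgebraicClosure k ⊗[k] W v),
      (∀ a, ∀ x ∈ U (tl a), (φ a).baseChange (AlgebraicClosure k) x ∈ U (hd a)) →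
      (¬ ∀ v, U v = ⊥) → (¬ ∀ v, U v = ⊤) →
      0 < ∑ v, θ v * (Module.finrank (AlgebraicClosure k) (U v) : ℤ)) :
    -- End_Q(W) = k · id:
    (∀ f : ∀ v, W v →ₗ[k] W v,
      (∀ a, (f (hd a)).comp (φ a) = (φ a).comp (f (tl a))) →
      ∃ c : k, ∀ v, f v = c • (LinearMap.id : W v →ₗ[k] W v)) ∧
    -- the stabiliser of W, i.e. Aut_Q(W), is the diagonal Δ = kˣ · id:
    (∀ g : ∀ v, W v ≃ₗ[k] W v,
      (∀ a x, g (hd a) (φ a x) = φ a (g (tl a) x)) →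
      ∃ c : kˣ, ∀ v x, g v x = (c : k) • x) :=
  stmt_18_general k V A hd tl θ W φ hθdim hgs
end
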